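/- Let G be a k-uniform hypergraph on n vertices with degree sequence d₁ ≥ d₂ ≥ … ≥ d_n, with d₁ > d₂ > 0. Let d* be a root of h(t) = d₂ t^k + (d₂ − d₁) t^{k−1} − d₁ in ((d₁/d₂)^{1/k}, d₁/d₂). Then the signless Laplacian spectral radius satisfies μ(G) ≤ d₁ + d₁ (1/d*)^{k−1}. -/

import Mathlib

/-- The spectral radius of an order-`k` tensor of dimension `n`: the largest modulus of its
(complex) eigenvalues, where `ρ` is an eigenvalue if `T x = ρ x^{[k-1]}` for some `x ≠ 0`. -/
noncomputable def specRad (n k : ℕ) (T : Fin n → (Fin (k-1) → Fin n) → ℝ) : ℝ :=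
  sSup {r : ℝ | ∃ ρ : ℂ, ‖ρ‖ = r ∧ ∃ x : Fin n → ℂ, x ≠ 0 ∧
    ∀ i, (∑ f : Fin (k-1) → Fin n, (T i f : ℂ) * ∏ a, x (f a)) = ρ * x i ^ (k-1)}

/-- A hypergraph on vertex set `Fin n` is a finite set of edges; `hDeg` is the degree of
vertex `i`, the number of edges containing `i`. -/
def hDeg (n : ℕ) (E : Finset (Finset (Fin n))) (i : Fin n) : ℕ :=
  (E.filter (fun e => i ∈ e)).card

/-- The average 2-degree of vertex `i` in a `k`-uniform hypergraph:
`m_i = (Σ_{{i,i₂,…,i_k} ∈ E_i} d_{i₂} ⋯ d_{i_k}) / d_i^{k-1}`. -/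
noncomputable def avg2 (n k : ℕ) (E : Finset (Finset (Fin n))) (i : Fin n) : ℝ :=
  (∑ e ∈ E.filter (fun e => i ∈ e), ∏ j ∈ e.erase i, (hDeg n E j : ℝ)) /
    (hDeg n E i : ℝ) ^ (k-1)

/-- The adjacency tensor of a `k`-uniform hypergraph: entry `1/(k-1)!` at `(i₁,…,i_k)` when
`{i₁,…,i_k}` is an edge, and `0` otherwise. -/
noncomputable def adjT (n k : ℕ) (E : Finset (Finset (Fin n))) :
    Fin n → (Fin (k-1) → Fin n) → ℝ :=
  fun i f => if insert i (Finset.image f Finset.univ) ∈ E then 1 / (k-1).factorial else 0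

/-- The signless Laplacian tensor `Q(G) = D(G) + A(G)`. -/
noncomputable def qT (n k : ℕ) (E : Finset (Finset (Fin n))) :
    Fin n → (Fin (k-1) → Fin n) → ℝ :=
  fun i f => (if ∀ a, f a = i then (hDeg n E i : ℝ) else 0) + adjT n k E i f

/-- A hypergraph is connected if every pair of distinct vertices is joined by a sequence of
pairwise intersecting edges. -/
def HConn (n : ℕ) (E : Finset (Finset (Fin n))) : Prop :=
  ∀ u v : Fin n, u ≠ v → ∃ r : ℕ, ∃ es : Fin (r+1) → Finset (Fin n),
    (∀ s, es s ∈ E) ∧ u ∈ es 0 ∧ v ∈ es (Fin.last r) ∧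
    ∀ s : Fin r, (es s.castSucc ∩ es s.succ).Nonempty

/-!
Scale the eigenvector by the weights `u = (t, 1, …, 1)`, where vertex `v` has the largest degree
`d₁`, and look at a vertex where `|xᵢ| / uᵢ` is maximal. The `u`-weighted row sums of `Q` are at
most `d₁ t^{k-1} + d₁` in row `v` (an edge through `v` meets no other weight `t`) and at most
`d₂ (1 + t)` in every other row (an edge meets `v` at most once). Hence
`μ(G) ≤ max (d₁ + d₁ t^{1-k}) (d₂ (1 + t))`, and `h(d*) = 0` says exactly that the two terms agree
at `t = d*`.
-/

open Finset Function
open scoped Nat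

section Tensor

variable {n k : ℕ} {T : Fin n → (Fin (k-1) → Fin n) → ℝ} {u : Fin n → ℝ} {B : ℝ}

theorem norm_le_of_weighted_row_sum_le (hT : ∀ i f, 0 ≤ T i f) (hu : ∀ i, 0 < u i)
    (hB : ∀ i, ∑ f, T i f * ∏ a, u (f a) ≤ B * u i ^ (k-1))
    {ρ : ℂ} {x : Fin n → ℂ} (hx : x ≠ 0)
    (heig : ∀ i, (∑ f : Fin (k-1) → Fin n, (T i f : ℂ) * ∏ a, x (f a)) = ρ * x i ^ (k-1)) :
    ‖ρ‖ ≤ B := by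
  obtain ⟨j, hj⟩ := Function.ne_iff.mp hx
  obtain ⟨i₀, -, hmax⟩ := exists_max_image univ (fun j => ‖x j‖ / u j) ⟨j, mem_univ j⟩
  set M := ‖x i₀‖ / u i₀
  have hM : 0 < M := (div_pos (norm_pos_iff.2 hj) (hu j)).trans_le (hmax j (mem_univ j))
  have hxle : ∀ j, ‖x j‖ ≤ u j * M := fun j => (div_le_iff₀' (hu j)).1 (hmax j (mem_univ j))
  have hxi₀ : ‖x i₀‖ = u i₀ * M := (mul_div_cancel₀ _ (hu i₀).ne').symm
  have key : ‖ρ‖ * (u i₀ * M) ^ (k-1) ≤ B * (u i₀ * M) ^ (k-1) :=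
    calc ‖ρ‖ * (u i₀ * M) ^ (k-1) = ‖∑ f, (T i₀ f : ℂ) * ∏ a, x (f a)‖ := by
          rw [heig, norm_mul, norm_pow, hxi₀]
      _ ≤ ∑ f, T i₀ f * ∏ a, ‖x (f a)‖ := (norm_sum_le _ _).trans_eq <| sum_congr rfl
          fun f _ => by rw [norm_mul, norm_prod, Complex.norm_real, Real.norm_of_nonneg (hT _ _)]
      _ ≤ ∑ f, T i₀ f * ∏ a, (u (f a) * M) := by
          gcongr with f _ a
          · exact hT _ _
          · exact hxle _
      _ = (∑ f, T i₀ f * ∏ a, u (f a)) * M ^ (k-1) := by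
          simp only [prod_mul_distrib, prod_const, card_univ, Fintype.card_fin, sum_mul, mul_assoc]
      _ ≤ B * u i₀ ^ (k-1) * M ^ (k-1) := by gcongr; exact hB i₀
      _ = B * (u i₀ * M) ^ (k-1) := by ring
  exact le_of_mul_le_mul_right key (pow_pos (mul_pos (hu i₀) hM) _)

theorem specRad_le_of_weighted_row_sum_le (hT : ∀ i f, 0 ≤ T i f) (hu : ∀ i, 0 < u i)
    (hB₀ : 0 ≤ B) (hB : ∀ i, ∑ f, T i f * ∏ a, u (f a) ≤ B * u i ^ (k-1)) :
    specRad n k T ≤ B :=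
  Real.sSup_le (by
    rintro _ ⟨ρ, rfl, x, hx, heig⟩
    exact norm_le_of_weighted_row_sum_le hT hu hB hx heig) hB₀

end Tensor

section EdgeTuples

variable {α : Type*} [DecidableEq α] {k : ℕ}

theorem injective_and_notMem_of_card_insert_image {i : α} {f : Fin (k-1) → α}
    (h : #(insert i (univ.image f)) = k) : Injective f ∧ i ∉ univ.image f := by
  have hk : 0 < k := h ▸ card_pos.2 (insert_nonempty _ _)
  have himage : #(univ.image f) ≤ k - 1 := card_image_le.trans (by simp)
  have hi : i ∉ univ.image f := fun hi => by rw [insert_eq_of_mem hi] at h; omega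
  refine ⟨fun a b hab => ?_, hi⟩
  have hcard : #(univ.image f) = #(univ : Finset (Fin (k-1))) := by
    rw [card_insert_of_notMem hi] at h; simp; omega
  exact card_image_iff.1 hcard (by simp) (by simp) hab

theorem card_filter_insert_image_eq_le [Fintype α] (i : α) {e : Finset α} (he : #e = k) :
    #{f : Fin (k-1) → α | insert i (univ.image f) = e} ≤ (k-1)! := by
  set S := ({f : Fin (k-1) → α | insert i (univ.image f) = e} : Finset _)
  rcases S.eq_empty_or_nonempty with hS | ⟨f₀, hf₀⟩
  · simp [hS]
  have hie : i ∈ e := (mem_filter.1 hf₀).2 ▸ mem_insert_self _ _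
  have hmem : ∀ f ∈ S, ∀ a, f a ∈ e.erase i := fun f hf a => by
    obtain ⟨-, hfe⟩ := mem_filter.1 hf
    have hi := (injective_and_notMem_of_card_insert_image (hfe ▸ he)).2
    exact mem_erase.2 ⟨fun h => hi (h ▸ mem_image_of_mem f (mem_univ a)),
      hfe ▸ mem_insert_of_mem (mem_image_of_mem f (mem_univ a))⟩
  let toEmb : S → (Fin (k-1) ↪ e.erase i) := fun f =>
    ⟨fun a => ⟨f.1 a, hmem f.1 f.2 a⟩, fun a b hab =>
      (injective_and_notMem_of_card_insert_image ((mem_filter.1 f.2).2 ▸ he)).1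
        (congrArg Subtype.val hab)⟩
  calc #S = Fintype.card S := (Fintype.card_coe _).symm
    _ ≤ Fintype.card (Fin (k-1) ↪ e.erase i) := Fintype.card_le_of_injective toEmb
        fun f g hfg => Subtype.ext (funext fun a => congrArg Subtype.val (DFunLike.congr_fun hfg a))
    _ = (k-1)! := by
        rw [Fintype.card_embedding_eq, Fintype.card_coe, card_erase_of_mem hie, he,
          Fintype.card_fin, Nat.descFactorial_self]

end EdgeTuples

section Hypergraph

variable {n k : ℕ} {E : Finset (Finset (Fin n))}

theorem card_filter_insert_image_mem_le (hcard : ∀ e ∈ E, #e = k) (i : Fin n) :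
    #{f : Fin (k-1) → Fin n | insert i (univ.image f) ∈ E} ≤ (k-1)! * hDeg n E i :=
  card_le_mul_card_image_of_maps_to (f := fun f => insert i (univ.image f))
    (t := E.filter (i ∈ ·))
    (fun _ hf => mem_filter.2 ⟨(mem_filter.1 hf).2, mem_insert_self _ _⟩) _
    fun e he => (card_le_card (filter_subset_filter _ (filter_subset _ _))).trans
      (card_filter_insert_image_eq_le i (hcard e (mem_filter.1 he).1))

theorem qT_nonneg (i : Fin n) (f : Fin (k-1) → Fin n) : 0 ≤ qT n k E i f := by
  unfold qT adjT
  positivity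

theorem sum_qT_mul_prod (u : Fin n → ℝ) (i : Fin n) :
    ∑ f, qT n k E i f * ∏ a, u (f a) =
      hDeg n E i * u i ^ (k-1) + ∑ f, adjT n k E i f * ∏ a, u (f a) := by
  simp only [qT, add_mul, sum_add_distrib]
  congr 1
  rw [Fintype.sum_eq_single (fun _ => i) fun f hf => by
    rw [if_neg fun h => hf (funext h), zero_mul]]
  simp

theorem sum_adjT_mul_le (hcard : ∀ e ∈ E, #e = k) (i : Fin n)
    {g : (Fin (k-1) → Fin n) → ℝ} {c : ℝ} (hc : 0 ≤ c)
    (hg : ∀ f, insert i (univ.image f) ∈ E → g f ≤ c) :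
    ∑ f, adjT n k E i f * g f ≤ c * hDeg n E i :=
  calc ∑ f, adjT n k E i f * g f
      ≤ ∑ f with insert i (univ.image f) ∈ E, c / (k-1)! := by
        rw [sum_filter]
        refine sum_le_sum fun f _ => ?_
        unfold adjT
        split_ifs with h
        · rw [one_div_mul_eq_div]; gcongr; exact hg f h
        · simp
    _ = #{f : Fin (k-1) → Fin n | insert i (univ.image f) ∈ E} * c / (k-1)! := by
        rw [sum_const, nsmul_eq_mul, mul_div_assoc]
    _ ≤ ((k-1)! * hDeg n E i : ℕ) * c / (k-1)! := by
        gcongr; exact_mod_cast card_filter_insert_image_mem_le hcard i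
    _ = c * hDeg n E i := by push_cast; field_simp

theorem prod_update_one_of_injective {ι : Type*} [Fintype ι] {f : ι → Fin n} (hf : Injective f)
    (v : Fin n) (t : ℝ) :
    ∏ a, update (1 : Fin n → ℝ) v t (f a) = if v ∈ univ.image f then t else 1 := by
  rw [← prod_image hf.injOn]
  split_ifs with h
  · simp [prod_update_of_mem h]
  · simp [prod_update_of_notMem h]

theorem specRad_qT_le_max (hcard : ∀ e ∈ E, #e = k) {v : Fin n} {t d : ℝ} (ht : 1 ≤ t)
    (hd : ∀ i, i ≠ v → (hDeg n E i : ℝ) ≤ d) :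
    specRad n k (qT n k E) ≤
      max (hDeg n E v + hDeg n E v * (1/t) ^ (k-1)) (d * (t + 1)) := by
  set u := update (1 : Fin n → ℝ) v t
  have hu : ∀ i, 0 < u i := fun i => by
    simp only [u, update_apply, Pi.one_apply]; split_ifs <;> linarith
  have hprod : ∀ i f, insert i (univ.image f) ∈ E →
      ∏ a, u (f a) = if v ∈ univ.image f then t else 1 := fun i f hf =>
    prod_update_one_of_injective (injective_and_notMem_of_card_insert_image (hcard _ hf)).1 v t
  refine specRad_le_of_weighted_row_sum_le (fun _ _ => qT_nonneg _ _) hu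
    (le_max_of_le_left (by positivity)) fun i => ?_
  rw [sum_qT_mul_prod]
  rcases eq_or_ne i v with rfl | hi
  · have hA := sum_adjT_mul_le hcard i (g := fun f => ∏ a, u (f a)) zero_le_one fun f hf => by
      rw [hprod i f hf, if_neg (injective_and_notMem_of_card_insert_image (hcard _ hf)).2]
    have hui : u i = t := update_self _ _ _
    have ht₀ : t ^ (k-1) ≠ 0 := by positivity
    calc hDeg n E i * u i ^ (k-1) + ∑ f, adjT n k E i f * ∏ a, u (f a)
        ≤ hDeg n E i * t ^ (k-1) + 1 * hDeg n E i := by rw [hui]; linarith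
      _ = (hDeg n E i + hDeg n E i * (1/t) ^ (k-1)) * u i ^ (k-1) := by
        rw [hui, one_div_pow, add_mul, mul_assoc, one_div_mul_cancel ht₀]; ring
      _ ≤ _ := mul_le_mul_of_nonneg_right (le_max_left _ _) (pow_nonneg (hu i).le _)
  · have hA := sum_adjT_mul_le hcard i (g := fun f => ∏ a, u (f a)) (zero_le_one.trans ht)
      fun f hf => by rw [hprod i f hf]; split_ifs <;> linarith
    calc hDeg n E i * u i ^ (k-1) + ∑ f, adjT n k E i f * ∏ a, u (f a)
        ≤ hDeg n E i * (t + 1) := by simp [u, hi]; linarith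
      _ ≤ d * (t + 1) := by gcongr; exact hd i hi
      _ ≤ _ := by simp [u, hi]

end Hypergraph

theorem mul_add_one_eq_of_root {k : ℕ} (hk : 1 ≤ k) {a b t : ℝ} (ht : t ≠ 0)
    (h : b * t ^ k + (b - a) * t ^ (k-1) - a = 0) : b * (t + 1) = a + a * (1/t) ^ (k-1) := by
  obtain ⟨m, rfl⟩ : ∃ m, k = m + 1 := ⟨k - 1, by omega⟩
  rw [add_tsub_cancel_right] at h
  rw [add_tsub_cancel_right, one_div_pow]
  field_simp
  linear_combination h

/-- Let `G` be a `k`-uniform hypergraph on `n` vertices with degree sequence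
`d₁ ≥ d₂ ≥ … ≥ d_n`, `d₁ > d₂ > 0`, and let `d*` be a root of
`h(t) = d₂ t^k + (d₂−d₁) t^{k−1} − d₁` in `((d₁/d₂)^{1/k}, d₁/d₂)`. Then
`μ(G) ≤ d₁ + d₁ (1/d*)^{k−1}`. -/
theorem stmt13 (n k : ℕ) (hk : 2 ≤ k) (hkn : k ≤ n)
    (E : Finset (Finset (Fin n))) (hcard : ∀ e ∈ E, e.card = k)
    (hsort : ∀ i j : Fin n, i ≤ j → hDeg n E j ≤ hDeg n E i)
    (hd2pos : 0 < hDeg n E ⟨1, by omega⟩)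
    (hd12 : hDeg n E ⟨1, by omega⟩ < hDeg n E ⟨0, by omega⟩)
    (dstar : ℝ)
    (hroot : (hDeg n E ⟨1, by omega⟩ : ℝ) * dstar ^ k +
        ((hDeg n E ⟨1, by omega⟩ : ℝ) - (hDeg n E ⟨0, by omega⟩ : ℝ)) * dstar ^ (k-1) -
        (hDeg n E ⟨0, by omega⟩ : ℝ) = 0)
    (hlow : ((hDeg n E ⟨0, by omega⟩ : ℝ) / (hDeg n E ⟨1, by omega⟩ : ℝ)) ^ ((1 : ℝ)/k)
        < dstar) :
    specRad n k (qT n k E) ≤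
      (hDeg n E ⟨0, by omega⟩ : ℝ) + (hDeg n E ⟨0, by omega⟩ : ℝ) * (1/dstar) ^ (k-1) := by
  have hd₂ : (0 : ℝ) < hDeg n E ⟨1, by omega⟩ := by exact_mod_cast hd2pos
  have ht : 1 < dstar := (Real.one_lt_rpow ((one_lt_div hd₂).2 (by exact_mod_cast hd12))
    (by positivity)).trans hlow
  have hd : ∀ i, i ≠ ⟨0, by omega⟩ → (hDeg n E i : ℝ) ≤ hDeg n E ⟨1, by omega⟩ := fun i hi => by
    have : i.val ≠ 0 := fun h => hi (Fin.ext h)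
    exact_mod_cast hsort _ _ (show 1 ≤ i.val by omega)
  calc specRad n k (qT n k E) ≤ _ := specRad_qT_le_max hcard ht.le hd
    _ = _ := by rw [mul_add_one_eq_of_root (by omega) (by positivity) hroot, max_self]
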